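/- Let P be the transition matrix of a time-homogeneous Markov chain on a finite state space S. Suppose there exist ε > 0, a probability distribution Q on S, and a positive integer k₀ such that P^{k₀}(x, y) ≥ ε·Q(y) for all x, y ∈ S. Then the chain has a unique stationary distribution π, and for any initial distribution π₀ and any positive integer k, the distribution π_k after k steps satisfies ‖π_k − π‖_TV ≤ (1 − ε)^{⌊k/k₀⌋}. -/
import Mathlib


open Matrix

open Finset Filter Topology

section Helpers
variable {S : Type*} [Fintype S]

lemma vm_apply (v : S → ℝ) (M : Matrix S S ℝ) (y : S) :
    (v ᵥ* M) y = ∑ x, v x * M x y := by simp [Matrix.vecMul, dotProduct]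

lemma l1_mul_bound (A : Matrix S S ℝ) (hA : ∀ x y, 0 ≤ A x y) (c : ℝ)
    (hc : ∀ x, ∑ y, A x y = c) (v : S → ℝ) :
    ∑ y, |∑ x, v x * A x y| ≤ c * ∑ x, |v x| := by
  calc ∑ y, |∑ x, v x * A x y| ≤ ∑ y, ∑ x, |v x| * A x y := by
        refine Finset.sum_le_sum fun y _ => ?_
        calc |∑ x, v x * A x y| ≤ ∑ x, |v x * A x y| := Finset.abs_sum_le_sum_abs _ _
          _ = ∑ x, |v x| * A x y := by
              refine Finset.sum_congr rfl fun x _ => ?_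
              rw [abs_mul, abs_of_nonneg (hA x y)]
    _ = ∑ x, |v x| * ∑ y, A x y := by rw [Finset.sum_comm]; simp [Finset.mul_sum]
    _ = c * ∑ x, |v x| := by simp only [hc]; rw [← Finset.sum_mul, mul_comm]

lemma sum_vecMul' (M : Matrix S S ℝ) (hrow : ∀ x, ∑ y, M x y = 1) (v : S → ℝ) :
    ∑ y, (v ᵥ* M) y = ∑ x, v x := by
  simp only [vm_apply]
  rw [Finset.sum_comm]
  simp [← Finset.mul_sum, hrow]

lemma pow_stoch (P : Matrix S S ℝ) [DecidableEq S]
    (hPnonneg : ∀ x y, 0 ≤ P x y) (hPstoch : ∀ x, ∑ y, P x y = 1) (n : ℕ) :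
    (∀ x y, 0 ≤ (P ^ n) x y) ∧ (∀ x, ∑ y, (P ^ n) x y = 1) := by
  induction n with
  | zero => constructor <;> intro x <;> simp [Matrix.one_apply] <;> intro y <;> positivity
  | succ n ih =>
    constructor
    · intro x y
      rw [pow_succ, Matrix.mul_apply]
      exact Finset.sum_nonneg fun z _ => mul_nonneg (ih.1 x z) (hPnonneg z y)
    · intro x
      simp only [pow_succ, Matrix.mul_apply]
      rw [Finset.sum_comm]
      simp [← Finset.mul_sum, hPstoch, ih.2 x]

lemma nonexp (M : Matrix S S ℝ) (hM : ∀ x y, 0 ≤ M x y) (hrow : ∀ x, ∑ y, M x y = 1)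
    (v : S → ℝ) : ∑ y, |(v ᵥ* M) y| ≤ ∑ x, |v x| := by
  simpa [vm_apply] using l1_mul_bound M hM 1 hrow v

lemma contract (M : Matrix S S ℝ) (Q : S → ℝ) (ε : ℝ)
    (hres : ∀ x y, ε * Q y ≤ M x y) (hrow : ∀ x, ∑ y, M x y = 1)
    (hQsum : ∑ y, Q y = 1)
    (v : S → ℝ) (hv : ∑ x, v x = 0) :
    ∑ y, |(v ᵥ* M) y| ≤ (1 - ε) * ∑ x, |v x| := by
  have h1 : ∀ y, (v ᵥ* M) y = ∑ x, v x * ((Matrix.of fun x y => M x y - ε * Q y) x y) := by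
    intro y
    rw [vm_apply]
    simp only [Matrix.of_apply, mul_sub, Finset.sum_sub_distrib, ← Finset.sum_mul, hv,
      zero_mul, sub_zero]
  simp only [h1]
  refine l1_mul_bound _ (fun x y => by simpa using sub_nonneg.mpr (hres x y)) (1 - ε)
    (fun x => ?_) v
  simp [Finset.sum_sub_distrib, hrow, ← Finset.mul_sum, hQsum]

lemma iter_contract (M : Matrix S S ℝ) (Q : S → ℝ) (ε : ℝ) (hε1 : ε ≤ 1)
    (hres : ∀ x y, ε * Q y ≤ M x y) (hMnonneg : ∀ x y, 0 ≤ M x y)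
    (hrow : ∀ x, ∑ y, M x y = 1) (hQsum : ∑ y, Q y = 1) [DecidableEq S]
    (v : S → ℝ) (hv : ∑ x, v x = 0) (q : ℕ) :
    ∑ y, |(v ᵥ* M ^ q) y| ≤ (1 - ε) ^ q * ∑ x, |v x| := by
  induction q with
  | zero => simp
  | succ q ih =>
    have hw : ∑ y, (v ᵥ* M ^ q) y = 0 := by
      rw [sum_vecMul' _ (pow_stoch M hMnonneg hrow q).2, hv]
    calc ∑ y, |(v ᵥ* M ^ (q + 1)) y| = ∑ y, |((v ᵥ* M ^ q) ᵥ* M) y| := by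
          rw [pow_succ, ← Matrix.vecMul_vecMul]
      _ ≤ (1 - ε) * ∑ y, |(v ᵥ* M ^ q) y| := contract M Q ε hres hrow hQsum _ hw
      _ ≤ (1 - ε) * ((1 - ε) ^ q * ∑ x, |v x|) :=
          mul_le_mul_of_nonneg_left ih (by linarith)
      _ = (1 - ε) ^ (q + 1) * ∑ x, |v x| := by ring

end Helpers

/-- Rosenthal's minorization theorem: if P^{k₀}(x,·) ≥ ε·Q(·) uniformly, the
chain has a unique stationary distribution π, and for any initial distribution
π₀ and k ≥ 1, the total variation distance of π₀P^k from π is at most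
(1-ε)^{⌊k/k₀⌋}. -/
theorem stmt_9 {S : Type*} [Fintype S] [DecidableEq S]
    (P : Matrix S S ℝ)
    (hPnonneg : ∀ x y, 0 ≤ P x y) (hPstoch : ∀ x, ∑ y, P x y = 1)
    (Q : S → ℝ) (hQnonneg : ∀ y, 0 ≤ Q y) (hQsum : ∑ y, Q y = 1)
    (ε : ℝ) (hε : 0 < ε) (k₀ : ℕ) (hk₀ : 1 ≤ k₀)
    (hminor : ∀ x y, ε * Q y ≤ (P ^ k₀) x y) :
    ∃ π : S → ℝ, (∀ y, 0 ≤ π y) ∧ (∑ y, π y = 1) ∧ π ᵥ* P = π ∧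
      (∀ π' : S → ℝ, (∀ y, 0 ≤ π' y) → (∑ y, π' y = 1) → π' ᵥ* P = π' → π' = π) ∧
      (∀ π₀ : S → ℝ, (∀ y, 0 ≤ π₀ y) → (∑ y, π₀ y = 1) → ∀ k : ℕ, 1 ≤ k →
        (1 / 2) * ∑ y, |(π₀ ᵥ* (P ^ k)) y - π y| ≤ (1 - ε) ^ (k / k₀)) := by
  -- basic facts
  set M : Matrix S S ℝ := P ^ k₀ with hMdef
  have hMnn : ∀ x y, 0 ≤ M x y := (pow_stoch P hPnonneg hPstoch k₀).1
  have hMrow : ∀ x, ∑ y, M x y = 1 := (pow_stoch P hPnonneg hPstoch k₀).2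
  have hSne : Nonempty S := by
    by_contra h
    rw [not_nonempty_iff] at h
    rw [Finset.univ_eq_empty, Finset.sum_empty] at hQsum
    exact zero_ne_one hQsum
  obtain ⟨x0⟩ := hSne
  have hε1 : ε ≤ 1 := by
    have h1 : ∑ y, ε * Q y ≤ ∑ y, M x0 y := Finset.sum_le_sum fun y _ => hminor x0 y
    rwa [hMrow x0, ← Finset.mul_sum, hQsum, mul_one] at h1
  -- the iterates u n = Q ᵥ* M^n
  set u : ℕ → (S → ℝ) := fun n => Q ᵥ* M ^ n with hudef
  have hsucc : ∀ n, u (n + 1) = u n ᵥ* M := by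
    intro n; simp only [hudef, pow_succ, ← Matrix.vecMul_vecMul]
  have hunn : ∀ n y, 0 ≤ u n y := by
    intro n
    induction n with
    | zero => intro y; simpa [hudef] using hQnonneg y
    | succ n ih =>
      intro y
      rw [hsucc, vm_apply]
      exact Finset.sum_nonneg fun x _ => mul_nonneg (ih x) (hMnn x y)
  have husum : ∀ n, ∑ y, u n y = 1 := by
    intro n
    induction n with
    | zero => simpa [hudef] using hQsum
    | succ n ih => rw [hsucc, sum_vecMul' M hMrow, ih]
  -- Cauchy sequence
  set v0 : S → ℝ := Q - Q ᵥ* M with hv0def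
  have hv0sum : ∑ x, v0 x = 0 := by
    simp only [hv0def, Pi.sub_apply, Finset.sum_sub_distrib, sum_vecMul' M hMrow, hQsum]
    ring
  have hv0abs : ∑ x, |v0 x| ≤ 2 := by
    have : ∀ x, |v0 x| ≤ Q x + (Q ᵥ* M) x := by
      intro x
      have h1 : 0 ≤ (Q ᵥ* M) x := by
        rw [vm_apply]; exact Finset.sum_nonneg fun z _ => mul_nonneg (hQnonneg z) (hMnn z x)
      calc |v0 x| ≤ |Q x| + |(Q ᵥ* M) x| := abs_sub _ _
        _ = Q x + (Q ᵥ* M) x := by rw [abs_of_nonneg (hQnonneg x), abs_of_nonneg h1]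
    calc ∑ x, |v0 x| ≤ ∑ x, (Q x + (Q ᵥ* M) x) := Finset.sum_le_sum fun x _ => this x
      _ = 2 := by
          rw [Finset.sum_add_distrib, hQsum, sum_vecMul' M hMrow, hQsum]; norm_num
  have hdiff : ∀ n, u n - u (n + 1) = v0 ᵥ* M ^ n := by
    intro n
    have h2 : u (n + 1) = (Q ᵥ* M) ᵥ* M ^ n := by
      simp only [hudef, pow_succ', ← Matrix.vecMul_vecMul]
    rw [h2, hudef]
    simp only [hv0def]
    rw [Matrix.sub_vecMul]
  have hdistb : ∀ n, dist (u n) (u (n + 1)) ≤ 2 * (1 - ε) ^ n := by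
    intro n
    have hpow : (0:ℝ) ≤ (1 - ε) ^ n := pow_nonneg (by linarith) n
    rw [dist_pi_le_iff (by linarith)]
    intro y
    rw [Real.dist_eq]
    have h3 : |u n y - u (n + 1) y| = |(v0 ᵥ* M ^ n) y| := by
      rw [← hdiff n]; rfl
    rw [h3]
    calc |(v0 ᵥ* M ^ n) y| ≤ ∑ z, |(v0 ᵥ* M ^ n) z| :=
          Finset.single_le_sum (f := fun z => |(v0 ᵥ* M ^ n) z|)
            (fun z _ => abs_nonneg _) (Finset.mem_univ y)
      _ ≤ (1 - ε) ^ n * ∑ x, |v0 x| :=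
          iter_contract M Q ε hε1 hminor hMnn hMrow hQsum v0 hv0sum n
      _ ≤ 2 * (1 - ε) ^ n := by nlinarith
  have hcauchy : CauchySeq u := cauchySeq_of_le_geometric (1 - ε) 2 (by linarith) hdistb
  obtain ⟨πi, hlim⟩ := cauchySeq_tendsto_of_complete hcauchy
  have hlimc : ∀ y, Tendsto (fun n => u n y) atTop (𝓝 (πi y)) :=
    fun y => tendsto_pi_nhds.mp hlim y
  have hπinn : ∀ y, 0 ≤ πi y := fun y => ge_of_tendsto' (hlimc y) (fun n => hunn n y)
  have hπisum : ∑ y, πi y = 1 := by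
    have h1 : Tendsto (fun n => ∑ y, u n y) atTop (𝓝 (∑ y, πi y)) :=
      tendsto_finset_sum _ fun y _ => hlimc y
    have h2 : Tendsto (fun n => ∑ y, u n y) atTop (𝓝 1) := by
      simp only [husum]; exact tendsto_const_nhds
    exact tendsto_nhds_unique h1 h2
  have hπifix : πi ᵥ* M = πi := by
    funext y
    have h1 : Tendsto (fun n => u (n + 1) y) atTop (𝓝 (πi y)) :=
      (hlimc y).comp (tendsto_add_atTop_nat 1)
    have h2 : Tendsto (fun n => u (n + 1) y) atTop (𝓝 ((πi ᵥ* M) y)) := by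
      have : ∀ n, u (n + 1) y = ∑ x, u n x * M x y := by
        intro n; rw [hsucc, vm_apply]
      simp only [this, vm_apply]
      exact tendsto_finset_sum _ fun x _ =>
        (hlimc x).mul_const (M x y)
    exact tendsto_nhds_unique h2 h1
  -- stationarity under all powers
  have stat_pow : ∀ (w : S → ℝ), w ᵥ* P = w → ∀ n, w ᵥ* P ^ n = w := by
    intro w hw n
    induction n with
    | zero => simp
    | succ n ih => rw [pow_succ, ← Matrix.vecMul_vecMul, ih, hw]
  -- the candidate stationary distribution: Cesàro average
  set π : S → ℝ := fun y => (k₀ : ℝ)⁻¹ * ∑ j ∈ Finset.range k₀, (πi ᵥ* P ^ j) y with hπdef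
  have hk₀pos : (0:ℝ) < (k₀ : ℝ) := by exact_mod_cast hk₀
  have hPjnn : ∀ (j : ℕ) y, 0 ≤ (πi ᵥ* P ^ j) y := by
    intro j y
    rw [vm_apply]
    exact Finset.sum_nonneg fun x _ => mul_nonneg (hπinn x) ((pow_stoch P hPnonneg hPstoch j).1 x y)
  have hPjsum : ∀ (j : ℕ), ∑ y, (πi ᵥ* P ^ j) y = 1 := by
    intro j
    rw [sum_vecMul' _ (pow_stoch P hPnonneg hPstoch j).2, hπisum]
  have hπnn : ∀ y, 0 ≤ π y := by
    intro y
    exact mul_nonneg (by positivity) (Finset.sum_nonneg fun j _ => hPjnn j y)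
  have hπsum : ∑ y, π y = 1 := by
    simp only [hπdef, ← Finset.mul_sum]
    rw [Finset.sum_comm]
    simp only [hPjsum]
    rw [Finset.sum_const, Finset.card_range, nsmul_eq_mul, mul_one,
      inv_mul_cancel₀ (ne_of_gt hk₀pos)]
  have hπstat : π ᵥ* P = π := by
    funext y
    have hkey : ∀ (f : ℕ → ℝ), f k₀ = f 0 →
        ∑ j ∈ Finset.range k₀, f (j + 1) = ∑ j ∈ Finset.range k₀, f j := by
      intro f hf
      have h1 := Finset.sum_range_succ' f k₀
      have h2 := Finset.sum_range_succ f k₀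
      linarith
    calc (π ᵥ* P) y
        = ∑ x, ((k₀ : ℝ)⁻¹ * ∑ j ∈ Finset.range k₀, (πi ᵥ* P ^ j) x) * P x y := by
          rw [vm_apply]
      _ = (k₀ : ℝ)⁻¹ * ∑ x, ∑ j ∈ Finset.range k₀, (πi ᵥ* P ^ j) x * P x y := by
          rw [Finset.mul_sum]
          refine Finset.sum_congr rfl fun x _ => ?_
          rw [mul_assoc, Finset.sum_mul]
      _ = (k₀ : ℝ)⁻¹ * ∑ j ∈ Finset.range k₀, ∑ x, (πi ᵥ* P ^ j) x * P x y := by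
          rw [Finset.sum_comm]
      _ = (k₀ : ℝ)⁻¹ * ∑ j ∈ Finset.range k₀, (πi ᵥ* P ^ (j + 1)) y := by
          congr 1
          refine Finset.sum_congr rfl fun j _ => ?_
          rw [pow_succ, ← Matrix.vecMul_vecMul, vm_apply]
      _ = π y := by
          rw [hkey (fun j => (πi ᵥ* P ^ j) y) (by
            show (πi ᵥ* P ^ k₀) y = (πi ᵥ* P ^ 0) y
            rw [← hMdef, hπifix, pow_zero, Matrix.vecMul_one])]
  have hπstatpow : ∀ n, π ᵥ* P ^ n = π := stat_pow π hπstat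
  refine ⟨π, hπnn, hπsum, hπstat, ?_, ?_⟩
  · -- uniqueness
    intro π' hπ'nn hπ'sum hπ'stat
    have hv : ∑ x, (π' - π) x = 0 := by
      simp only [Pi.sub_apply, Finset.sum_sub_distrib, hπ'sum, hπsum]; ring
    have hfix : (π' - π) ᵥ* M = π' - π := by
      rw [Matrix.sub_vecMul, hMdef, stat_pow π' hπ'stat, hπstatpow]
    have hcon := contract M Q ε hminor hMrow hQsum (π' - π) hv
    rw [hfix] at hcon
    have hnn : (0:ℝ) ≤ ∑ y, |(π' - π) y| := Finset.sum_nonneg fun y _ => abs_nonneg _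
    have hzero : ∑ y, |(π' - π) y| = 0 := by nlinarith
    funext y
    have := (Finset.sum_eq_zero_iff_of_nonneg (fun y _ => abs_nonneg ((π' - π) y))).mp
      hzero y (Finset.mem_univ y)
    have h5 : π' y - π y = 0 := by
      have := abs_eq_zero.mp this
      simpa using this
    linarith
  · -- convergence
    intro π₀ h0nn h0sum k _
    set q := k / k₀ with hq
    have hkdecomp : k = k₀ * q + k % k₀ := (Nat.div_add_mod k k₀).symm
    have hPk : P ^ k = M ^ q * P ^ (k % k₀) := by
      conv_lhs => rw [hkdecomp]
      rw [pow_add, pow_mul, ← hMdef]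
    set v : S → ℝ := π₀ - π with hvdef
    have hvsum : ∑ x, v x = 0 := by
      simp only [hvdef, Pi.sub_apply, Finset.sum_sub_distrib, h0sum, hπsum]; ring
    have hvabs : ∑ x, |v x| ≤ 2 := by
      calc ∑ x, |v x| ≤ ∑ x, (π₀ x + π x) := by
            refine Finset.sum_le_sum fun x _ => ?_
            calc |v x| ≤ |π₀ x| + |π x| := abs_sub _ _
              _ = π₀ x + π x := by rw [abs_of_nonneg (h0nn x), abs_of_nonneg (hπnn x)]
        _ = 2 := by rw [Finset.sum_add_distrib, h0sum, hπsum]; norm_num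
    have heq : ∀ y, (π₀ ᵥ* P ^ k) y - π y = (v ᵥ* P ^ k) y := by
      intro y
      rw [hvdef, Matrix.sub_vecMul, stat_pow π hπstat k]
      rfl
    have hbound : ∑ y, |(v ᵥ* P ^ k) y| ≤ (1 - ε) ^ q * 2 := by
      have hmid : ∑ x, |(v ᵥ* M ^ q) x| ≤ (1 - ε) ^ q * 2 := by
        calc ∑ x, |(v ᵥ* M ^ q) x| ≤ (1 - ε) ^ q * ∑ x, |v x| :=
              iter_contract M Q ε hε1 hminor hMnn hMrow hQsum v hvsum q
          _ ≤ (1 - ε) ^ q * 2 :=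
              mul_le_mul_of_nonneg_left hvabs (pow_nonneg (by linarith) q)
      calc ∑ y, |(v ᵥ* P ^ k) y| = ∑ y, |((v ᵥ* M ^ q) ᵥ* P ^ (k % k₀)) y| := by
            rw [hPk, ← Matrix.vecMul_vecMul]
        _ ≤ ∑ x, |(v ᵥ* M ^ q) x| :=
            nonexp _ (pow_stoch P hPnonneg hPstoch (k % k₀)).1
              (pow_stoch P hPnonneg hPstoch (k % k₀)).2 _
        _ ≤ (1 - ε) ^ q * 2 := hmid
    simp only [heq]
    linarith
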